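/- Let p be a prime and r ≥ 1 with q = p^r ≥ 3, and let G = F ⋊ Fˣ be the semidirect product of the additive group of F = GaloisField p r by its unit group Fˣ acting by multiplication. Then there exist a bijection σ : ZMod (q−1) × F ≃ G and a generator z of the cyclic group Fˣ such that, reindexing each adjacency matrix A_C ∈ Matrix G G ℂ of the group association scheme by σ (i.e., taking the matrix whose ((a,u),(b,v)) entry is (A_C)_{σ(a,u), σ(b,v)}): (i) the reindexed adjacency matrix of the class {e} is the identity matrix I ⊗ I; (ii) the reindexed adjacency matrix of the conjugacy class G' ∖ {e} is the Kronecker product I ⊗ (J − I), where J is the all-ones q × q matrix; and (iii) for every i with 1 ≤ i ≤ q−2, the reindexed adjacency matrix of the conjugacy class of the element (0, zⁱ) is the Kronecker product Qⁱ ⊗ J, where Q ∈ Matrix (ZMod (q−1)) (ZMod (q−1)) ℂ is defined by Q_{a,b} = 1 if b = a + 1 and Q_{a,b} = 0 otherwise. -/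

import Mathlib

/-!
Write elements of `F ⋊ Fˣ` as pairs `(x, u)` and fix a generator `z` of the cyclic group `Fˣ`, so
that `u = z ^ a` with `a : ZMod (q - 1)`. Conjugating `(0, u)` by `(y, 1)` gives `((1 - u) y, u)`;
for `u ≠ 1` this reaches every element with second coordinate `u`, so the class of `(0, u)` is
`F × {u}`, and `G'` is the kernel `F × {1}` of the projection to `Fˣ`. In the coordinates
`(a, x) ↦ (x, z ^ a)` the quotient `σ (b, y) * (σ (a, x))⁻¹` has second coordinate `z ^ (b - a)`,
so membership in each of these classes is a condition on `b - a` and on whether `x = y`: exactly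
the entry pattern of the Kronecker products.
-/

open scoped Classical Pointwise

/-- The conjugacy class of `x` in `G`. -/
def conjClass {G : Type*} [Group G] (x : G) : Set G := {y | ∃ g : G, g * x * g⁻¹ = y}

/-- The adjacency matrix of a subset `C` of `G`. -/
noncomputable def adjMat (G : Type*) [Group G] (C : Set G) : Matrix G G ℂ :=
  Matrix.of fun x y => if y * x⁻¹ ∈ C then (1 : ℂ) else 0

/-- The dual idempotent of a subset `C` of `G` (base point the identity). -/
noncomputable def dualIdem (G : Type*) [Group G] (C : Set G) : Matrix G G ℂ :=
  Matrix.of fun x y => if x = y ∧ y ∈ C then (1 : ℂ) else 0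

/-- The Terwilliger algebra of the group association scheme of `G`, with base point `e`. -/
noncomputable def TerwAlg (G : Type*) [Group G] [Fintype G] [DecidableEq G] : Subalgebra ℂ (Matrix G G ℂ) :=
  Algebra.adjoin ℂ
    ((Set.range fun x : G => adjMat G (conjClass x)) ∪
     (Set.range fun x : G => dualIdem G (conjClass x)))

/-- A Camina group: a nonabelian group in which every conjugacy class outside the
commutator subgroup is a coset of the commutator subgroup. -/
def IsCamina (G : Type*) [Group G] : Prop :=
  (¬ ∀ a b : G, a * b = b * a) ∧
  ∀ x : G, x ∉ commutator G → conjClass x = x • (commutator G : Set G)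

/-- The action of the unit group of a field on (the multiplicative version of) its
additive group, by multiplication. -/
noncomputable def frobAct (F : Type*) [Field F] : Fˣ →* MulAut (Multiplicative F) where
  toFun u := AddEquiv.toMultiplicative (DistribMulAction.toAddAut Fˣ F u)
  map_one' := by ext x; simp [DistribMulAction.toAddAut] <;> rfl
  map_mul' u v := by ext x; simp [DistribMulAction.toAddAut, mul_smul] <;> rfl


/-- The Frobenius group `F ⋊ Fˣ` for `F` the field with `p ^ r` elements. -/
abbrev FrobGrp (p r : ℕ) [Fact p.Prime] : Type :=
  Multiplicative (GaloisField p r) ⋊[frobAct (GaloisField p r)] (GaloisField p r)ˣ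

open Kronecker

/-- The cyclic-shift permutation matrix `Q` on `ZMod m`. -/
noncomputable def cycShift (m : ℕ) : Matrix (ZMod m) (ZMod m) ℂ :=
  Matrix.of fun a b => if b = a + 1 then (1 : ℂ) else 0

open SemidirectProduct
open scoped commutatorElement

lemma conjClass_one {G : Type*} [Group G] : conjClass (1 : G) = {1} := by
  ext g; simp [conjClass]

lemma submatrix_adjMat_eq_kronecker {G α β : Type*} [Group G] (C : Set G) (σ : α × β → G)
    (P : α → α → Prop) (Q : β → β → Prop) [DecidableRel P] [DecidableRel Q]
    (hC : ∀ a b x y, σ (b, y) * (σ (a, x))⁻¹ ∈ C ↔ P a b ∧ Q x y) :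
    Matrix.of (fun u v => adjMat G C (σ u) (σ v)) =
      (Matrix.of fun a b => if P a b then (1 : ℂ) else 0) ⊗ₖ
        Matrix.of fun x y => if Q x y then (1 : ℂ) else 0 := by
  ext ⟨a, x⟩ ⟨b, y⟩
  simp only [adjMat, Matrix.of_apply, Matrix.kroneckerMap_apply, hC, ite_zero_mul_ite_zero, mul_one]

lemma cycShift_pow (m i : ℕ) [NeZero m] :
    cycShift m ^ i = Matrix.of fun a b => if b = a + (i : ZMod m) then (1 : ℂ) else 0 := by
  induction i with
  | zero => ext a b; simp [Matrix.one_apply, eq_comm]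
  | succ i ih =>
    rw [pow_succ, ih]
    ext a b
    simp only [Matrix.mul_apply, cycShift, Matrix.of_apply, ite_mul, one_mul, zero_mul,
      Finset.sum_ite_eq', Finset.mem_univ, if_true, add_assoc, Nat.cast_succ]

section FrobeniusGroup

variable {F : Type*} [Field F]

@[simp]
lemma frobAct_apply (u : Fˣ) (x : Multiplicative F) :
    frobAct F u x = .ofAdd ((u : F) * x.toAdd) := rfl

lemma inl_mul_inr_mul_inl_inv (y : F) (u : Fˣ) :
    (inl (.ofAdd y) * inr u * (inl (.ofAdd y))⁻¹ : Multiplicative F ⋊[frobAct F] Fˣ) =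
      ⟨.ofAdd ((1 - (u : F)) * y), u⟩ := by
  ext
  · simp [mul_left, inv_left]
    ring
  · simp

lemma exists_conj_inr_eq {u : Fˣ} (hu : u ≠ 1) (g : Multiplicative F ⋊[frobAct F] Fˣ)
    (hg : g.right = u) : ∃ h, h * inr u * h⁻¹ = g := by
  have hu' : 1 - (u : F) ≠ 0 := sub_ne_zero.2 fun h => hu (Units.ext h.symm)
  refine ⟨inl (.ofAdd ((1 - (u : F))⁻¹ * g.left.toAdd)), ?_⟩
  rw [inl_mul_inr_mul_inl_inv, mul_inv_cancel_left₀ hu']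
  ext <;> simp [hg]

lemma conjClass_inr {u : Fˣ} (hu : u ≠ 1) :
    conjClass (inr u : Multiplicative F ⋊[frobAct F] Fˣ) = {g | g.right = u} := by
  ext g
  constructor
  · rintro ⟨h, rfl⟩
    simp [mul_comm]
  · exact exists_conj_inr_eq hu g

lemma commutator_eq_ker_rightHom [Nontrivial Fˣ] :
    commutator (Multiplicative F ⋊[frobAct F] Fˣ) = rightHom.ker := by
  refine le_antisymm (Abelianization.commutator_subset_ker _) fun g hg => ?_
  obtain ⟨u, hu⟩ := exists_ne (1 : Fˣ)
  obtain ⟨h, hh⟩ := exists_conj_inr_eq hu (g * inr u) (by simpa using hg)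
  have hg_eq : g = ⁅h, inr u⁆ := by rw [commutatorElement_def, hh, mul_inv_cancel_right]
  rw [hg_eq, commutator_def]
  exact Subgroup.commutator_mem_commutator (Subgroup.mem_top h) (Subgroup.mem_top _)

variable {M : Type*} [AddCommGroup M] (e : Multiplicative M ≃* Fˣ)

def frobCoords : M × F ≃ Multiplicative F ⋊[frobAct F] Fˣ where
  toFun q := ⟨.ofAdd q.2, e (.ofAdd q.1)⟩
  invFun g := ((e.symm g.right).toAdd, g.left.toAdd)
  left_inv q := by simp
  right_inv g := by ext <;> simp

lemma right_frobCoords_mul_inv (a b : M) (x y : F) :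
    (frobCoords e (b, y) * (frobCoords e (a, x))⁻¹).right = e (.ofAdd (b - a)) := by
  simp [frobCoords, mul_right, inv_right, ofAdd_sub, div_eq_mul_inv]

lemma right_frobCoords_mul_inv_eq_iff (a b c : M) (x y : F) :
    (frobCoords e (b, y) * (frobCoords e (a, x))⁻¹).right = e (.ofAdd c) ↔ b = a + c := by
  rw [right_frobCoords_mul_inv, e.apply_eq_iff_eq, EmbeddingLike.apply_eq_iff_eq,
    sub_eq_iff_eq_add']

lemma frobCoords_mul_inv_mem_conjClass_one (a b : M) (x y : F) :
    frobCoords e (b, y) * (frobCoords e (a, x))⁻¹ ∈ conjClass 1 ↔ a = b ∧ x = y := by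
  rw [conjClass_one, Set.mem_singleton_iff, mul_inv_eq_one, (frobCoords e).apply_eq_iff_eq,
    Prod.mk.injEq, eq_comm, @eq_comm _ y]

lemma frobCoords_mul_inv_mem_ker_diff_one (a b : M) (x y : F) :
    frobCoords e (b, y) * (frobCoords e (a, x))⁻¹ ∈
        ((rightHom.ker : Subgroup (Multiplicative F ⋊[frobAct F] Fˣ)) : Set _) \ {1} ↔
      a = b ∧ x ≠ y := by
  rw [Set.mem_sdiff, SetLike.mem_coe, MonoidHom.mem_ker, rightHom_eq_right,
    right_frobCoords_mul_inv, map_eq_one_iff _ e.injective, ofAdd_eq_one, sub_eq_zero,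
    Set.mem_singleton_iff, mul_inv_eq_one, (frobCoords e).apply_eq_iff_eq, Prod.mk.injEq]
  grind

end FrobeniusGroup

/-- Theorem 5.3: the adjacency matrices of the group association scheme of the Frobenius
group `ℤ_p^r ⋊ ℤ_{p^r-1}`, suitably reindexed, are Kronecker products exhibiting the
wreath-product structure `K_{p^r} ≀ G(ℤ_{p^r-1})`. -/
theorem stmt15 (p r : ℕ) [Fact p.Prime] (hr : 1 ≤ r) (hq : 3 ≤ p ^ r)
    [NeZero (p ^ r - 1)] :
    ∃ (σ : ZMod (p ^ r - 1) × GaloisField p r ≃ FrobGrp p r)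
      (z : (GaloisField p r)ˣ),
      (∀ u : (GaloisField p r)ˣ, u ∈ Subgroup.zpowers z) ∧
      (Matrix.of (fun a b => adjMat (FrobGrp p r) (conjClass (1 : FrobGrp p r)) (σ a) (σ b)) =
        (1 : Matrix (ZMod (p ^ r - 1)) (ZMod (p ^ r - 1)) ℂ) ⊗ₖ
          (1 : Matrix (GaloisField p r) (GaloisField p r) ℂ)) ∧
      (Matrix.of (fun a b =>
          adjMat (FrobGrp p r)
            ((commutator (FrobGrp p r) : Set (FrobGrp p r)) \ {1}) (σ a) (σ b)) =
        (1 : Matrix (ZMod (p ^ r - 1)) (ZMod (p ^ r - 1)) ℂ) ⊗ₖ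
          ((Matrix.of fun _ _ : GaloisField p r => (1 : ℂ)) - 1)) ∧
      (∀ i : ℕ, 1 ≤ i → i ≤ p ^ r - 2 →
        Matrix.of (fun a b =>
            adjMat (FrobGrp p r)
              (conjClass (SemidirectProduct.inr (z ^ i) : FrobGrp p r)) (σ a) (σ b)) =
          ((cycShift (p ^ r - 1)) ^ i) ⊗ₖ (Matrix.of fun _ _ : GaloisField p r => (1 : ℂ))) := by
  obtain ⟨z, hz⟩ := IsCyclic.exists_generator (α := (GaloisField p r)ˣ)
  have hcard : Nat.card (GaloisField p r)ˣ = p ^ r - 1 := by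
    rw [Nat.card_units, GaloisField.card p r (by omega)]
  have : Nontrivial (GaloisField p r)ˣ := Finite.one_lt_card_iff_nontrivial.1 (by omega)
  let e := zmodMulEquivOfGenerator hz hcard
  have hz_pow : ∀ i : ℕ, z ^ i = e (.ofAdd i) := fun i => by
    simpa using (zmodMulEquivOfGenerator_apply_ofAdd_intCast hz hcard i).symm
  refine ⟨frobCoords e, z, hz, ?_, ?_, fun i hi1 hi2 => ?_⟩
  · exact submatrix_adjMat_eq_kronecker _ _ _ _ (frobCoords_mul_inv_mem_conjClass_one e)
  · have hJ : (Matrix.of fun _ _ : GaloisField p r => (1 : ℂ)) - 1 =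
        Matrix.of fun x y => if x ≠ y then 1 else 0 := by
      ext x y; by_cases x = y <;> simp [*]
    rw [commutator_eq_ker_rightHom, hJ]
    exact submatrix_adjMat_eq_kronecker _ _ _ _ (frobCoords_mul_inv_mem_ker_diff_one e)
  · have hzi : z ^ i ≠ 1 := pow_ne_one_of_lt_orderOf (by omega)
      (by rw [orderOf_eq_card_of_forall_mem_zpowers hz, hcard]; omega)
    rw [conjClass_inr hzi, cycShift_pow, hz_pow]
    exact submatrix_adjMat_eq_kronecker _ _ _ (fun _ _ => True) fun a b x y => by
      rw [Set.mem_ofPred_eq, right_frobCoords_mul_inv_eq_iff, and_true]
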